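/- arXiv:2603.06475 — 2 statements merged into one kernel-verified Lean document; each statement's English description precedes it below -/
import Mathlib

section
/- Let d ≥ 2, k ∈ {1,…,d}, and for r > 1 set N(r) = ⌊|log(r-1)|/log d⌋. Then as r → 1⁺: (a) Σ_{n=0}^{N(r)} (1 - r^{-2 k d^n - 2}) = o(|log(r-1)|), and (b) Σ_{n > N(r)} r^{-2 k d^n - 2} is bounded uniformly in r. Consequently, (1/|log(r-1)|) Σ_{n=0}^{∞} r^{-2 k d^n - 2} → 1/log d as r → 1⁺. -/
/-!
Write `x = r - 1`. The cutoff `N = N(r)` is chosen so that `d ^ N ≤ x⁻¹ < d ^ (N + 1)`.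
Up to `N`, `1 - r ^ (-e) ≤ e x` and the exponents `e = 2 k d ^ n + 2` sum to `O(d ^ N)`,
so the head deficit is `O(d ^ N x) = O(1)`. Beyond `N`, Bernoulli gives
`r ^ (d ^ (N + 1)) ≥ 1 + d ^ (N + 1) x ≥ 2`, so the tail is dominated by `∑ 2 ^ (-(n + 1)) = 1`.
Hence the whole series is `N + 1 + O(1)`, and `(N + 1) / |log x| → 1 / log d`.
-/

open Filter Finset Topology

lemma pow_floor_div_log_le_exp {b t : ℝ} (hb : 1 < b) (ht : 0 ≤ t) :
    b ^ ⌊t / Real.log b⌋₊ ≤ Real.exp t := by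
  have hlog : 0 < Real.log b := Real.log_pos hb
  rw [← Real.exp_log (pow_pos (by linarith) _), Real.log_pow, Real.exp_le_exp,
    ← le_div_iff₀ hlog]
  exact Nat.floor_le (div_nonneg ht hlog.le)

lemma exp_lt_pow_floor_div_log_add_one {b : ℝ} (hb : 1 < b) (t : ℝ) :
    Real.exp t < b ^ (⌊t / Real.log b⌋₊ + 1) := by
  have hlog : 0 < Real.log b := Real.log_pos hb
  rw [← Real.exp_log (pow_pos (by linarith) _), Real.log_pow, Real.exp_lt_exp,
    ← div_lt_iff₀ hlog]
  exact_mod_cast Nat.lt_floor_add_one _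

lemma inv_le_exp_abs_log {x : ℝ} (hx : 0 < x) : x⁻¹ ≤ Real.exp |Real.log x| := by
  rw [← Real.exp_log (inv_pos.2 hx), Real.log_inv, Real.exp_le_exp]
  exact neg_le_abs _

lemma exp_abs_log_of_le_one {x : ℝ} (hx : 0 < x) (hx1 : x ≤ 1) :
    Real.exp |Real.log x| = x⁻¹ := by
  rw [abs_of_nonpos (Real.log_nonpos hx.le hx1), ← Real.log_inv, Real.exp_log (inv_pos.2 hx)]

lemma two_le_pow_of_one_le_mul_sub_one {r : ℝ} {m : ℕ} (h : 1 ≤ m * (r - 1)) : 2 ≤ r ^ m := by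
  have hr : 0 ≤ r - 1 := by
    by_contra! hneg
    nlinarith [(Nat.cast_nonneg m : (0 : ℝ) ≤ m)]
  have := one_add_mul_le_pow (by linarith : (-2 : ℝ) ≤ r - 1) m
  rw [add_sub_cancel] at this
  linarith

lemma summable_inv_pow_and_tsum_le_one {r : ℝ} {m : ℕ} {e : ℕ → ℕ} (hr : 1 ≤ r)
    (hm : 2 ≤ r ^ m) (he : ∀ n, m * (n + 1) ≤ e n) :
    Summable (fun n => (r ^ e n)⁻¹) ∧ ∑' n, (r ^ e n)⁻¹ ≤ 1 := by
  have hle : ∀ n, (r ^ e n)⁻¹ ≤ 2⁻¹ * 2⁻¹ ^ n := fun n => by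
    rw [← pow_succ']
    calc (r ^ e n)⁻¹ ≤ ((r ^ m) ^ (n + 1))⁻¹ := by
          rw [← pow_mul]
          exact inv_anti₀ (pow_pos (by linarith) _) (pow_le_pow_right₀ hr (he n))
      _ ≤ 2⁻¹ ^ (n + 1) := by
          rw [← inv_pow]
          exact pow_le_pow_left₀ (by positivity) (inv_anti₀ two_pos hm) _
  have hgeom : Summable (fun n : ℕ => (2 : ℝ)⁻¹ * 2⁻¹ ^ n) :=
    (summable_geometric_of_lt_one (by norm_num) (by norm_num)).mul_left _
  have hsum : Summable (fun n => (r ^ e n)⁻¹) :=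
    hgeom.of_nonneg_of_le (fun n => inv_nonneg.2 (pow_nonneg (by linarith) _)) hle
  refine ⟨hsum, ?_⟩
  calc ∑' n, (r ^ e n)⁻¹ ≤ ∑' n : ℕ, (2 : ℝ)⁻¹ * 2⁻¹ ^ n := hsum.tsum_le_tsum hle hgeom
    _ = 1 := by rw [tsum_mul_left, tsum_geometric_inv_two]; norm_num

lemma one_sub_inv_pow_le {r : ℝ} (hr : 0 < r) (e : ℕ) : 1 - (r ^ e)⁻¹ ≤ e * (r - 1) :=
  calc 1 - (r ^ e)⁻¹ ≤ Real.log (r ^ e) := Real.one_sub_inv_le_log_of_pos (pow_pos hr e)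
    _ = e * Real.log r := by rw [Real.log_pow]
    _ ≤ e * (r - 1) := by gcongr; exact Real.log_le_sub_one_of_pos hr

lemma tendsto_abs_log_sub_one_nhdsGT :
    Tendsto (fun r : ℝ => |Real.log (r - 1)|) (𝓝[>] 1) atTop := by
  have h : Tendsto (fun r : ℝ => r - 1) (𝓝[>] 1) (𝓝[>] 0) := by
    refine tendsto_nhdsWithin_iff.2 ⟨?_, ?_⟩
    · simpa using ((continuous_sub_right (1 : ℝ)).tendsto 1).mono_left nhdsWithin_le_nhds
    · filter_upwards [self_mem_nhdsWithin] with r (hr : 1 < r) using sub_pos.2 hr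
  exact tendsto_abs_atBot_atTop.comp (Real.tendsto_log_nhdsGT_zero.comp h)

lemma tendsto_floor_div_add_one_div_atTop {c : ℝ} (hc : 0 < c) :
    Tendsto (fun t : ℝ => ((⌊t / c⌋₊ + 1 : ℕ) : ℝ) / t) atTop (𝓝 c⁻¹) := by
  have h := (tendsto_nat_floor_mul_div_atTop (inv_nonneg.2 hc.le)).add tendsto_inv_atTop_zero
  rw [add_zero] at h
  refine h.congr' (Eventually.of_forall fun t => ?_)
  dsimp only
  rw [Nat.cast_add_one, add_div, inv_mul_eq_div, one_div]

lemma tendsto_div_abs_log_sub_one_of_bounded {f : ℝ → ℝ} {C : ℝ}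
    (hf : ∀ᶠ r in 𝓝[>] 1, 0 ≤ f r ∧ f r ≤ C) :
    Tendsto (fun r => f r / |Real.log (r - 1)|) (𝓝[>] 1) (𝓝 0) := by
  refine squeeze_zero' ?_ ?_
    ((tendsto_const_nhds (x := C)).div_atTop tendsto_abs_log_sub_one_nhdsGT)
  · filter_upwards [hf] with r hr using div_nonneg hr.1 (abs_nonneg _)
  · filter_upwards [hf] with r hr using div_le_div_of_nonneg_right hr.2 (abs_nonneg _)

lemma tsum_eq_sub_sum_one_sub_add_tsum_nat_add {f : ℕ → ℝ} {M : ℕ}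
    (hf : Summable fun n => f (M + n)) :
    ∑' n, f n = M - ∑ n ∈ range M, (1 - f n) + ∑' n, f (M + n) := by
  simp only [add_comm M] at hf ⊢
  rw [← ((summable_nat_add_iff M).1 hf).sum_add_tsum_nat_add M, sum_sub_distrib]
  simp

noncomputable def cutoff (d : ℕ) (r : ℝ) : ℕ := ⌊|Real.log (r - 1)| / Real.log d⌋₊

section Cutoff

variable {d k : ℕ} {r : ℝ}

lemma one_le_pow_cutoff_add_one_mul (hd : 1 < d) (hr : 1 < r) :
    1 ≤ (d : ℝ) ^ (cutoff d r + 1) * (r - 1) := by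
  have hr0 : 0 < r - 1 := sub_pos.2 hr
  calc 1 = (r - 1)⁻¹ * (r - 1) := (inv_mul_cancel₀ hr0.ne').symm
    _ ≤ (d : ℝ) ^ (cutoff d r + 1) * (r - 1) := by
      gcongr
      exact (inv_le_exp_abs_log hr0).trans
        (exp_lt_pow_floor_div_log_add_one (by exact_mod_cast hd) _).le

lemma pow_cutoff_mul_le_one (hd : 1 < d) (hr : 1 < r) (hr2 : r ≤ 2) :
    (d : ℝ) ^ cutoff d r * (r - 1) ≤ 1 := by
  have hr0 : 0 < r - 1 := sub_pos.2 hr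
  calc (d : ℝ) ^ cutoff d r * (r - 1) ≤ (r - 1)⁻¹ * (r - 1) := by
        gcongr
        rw [← exp_abs_log_of_le_one hr0 (by linarith)]
        exact pow_floor_div_log_le_exp (by exact_mod_cast hd) (abs_nonneg _)
    _ = 1 := inv_mul_cancel₀ hr0.ne'

lemma summable_tail_and_tsum_tail_le_one (hd : 1 < d) (hk : 1 ≤ k) (hr : 1 < r) {M : ℕ}
    (hM : 1 ≤ (d : ℝ) ^ M * (r - 1)) :
    Summable (fun n => (r ^ (2 * k * d ^ (M + n) + 2))⁻¹) ∧
      ∑' n, (r ^ (2 * k * d ^ (M + n) + 2))⁻¹ ≤ 1 := by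
  refine summable_inv_pow_and_tsum_le_one (m := d ^ M) hr.le
    (two_le_pow_of_one_le_mul_sub_one (by exact_mod_cast hM)) fun n => ?_
  calc d ^ M * (n + 1) ≤ d ^ M * d ^ n := Nat.mul_le_mul_left _ (Nat.lt_pow_self hd)
    _ = 1 * d ^ (M + n) := by rw [pow_add, one_mul]
    _ ≤ 2 * k * d ^ (M + n) + 2 := le_add_right (Nat.mul_le_mul_right _ (by omega))

lemma sum_range_one_sub_inv_pow_le (hd : 2 ≤ d) (hr : 1 ≤ r) (M : ℕ) :
    ∑ n ∈ range M, (1 - (r ^ (2 * k * d ^ n + 2))⁻¹) ≤ (2 * k + 2) * d ^ M * (r - 1) := by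
  have hexp : ∀ n, 2 * k * d ^ n + 2 ≤ (2 * k + 2) * d ^ n := fun n => by
    have : 1 ≤ d ^ n := Nat.one_le_pow _ _ (by omega)
    nlinarith
  have hsum : ∑ n ∈ range M, (2 * k * d ^ n + 2) ≤ (2 * k + 2) * d ^ M :=
    calc ∑ n ∈ range M, (2 * k * d ^ n + 2) ≤ ∑ n ∈ range M, (2 * k + 2) * d ^ n :=
          sum_le_sum fun n _ => hexp n
      _ ≤ (2 * k + 2) * d ^ M := by
          rw [← mul_sum]
          exact Nat.mul_le_mul_left _ (Nat.geomSum_lt hd fun _ hn => mem_range.1 hn).le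
  calc ∑ n ∈ range M, (1 - (r ^ (2 * k * d ^ n + 2))⁻¹)
      ≤ ∑ n ∈ range M, ((2 * k * d ^ n + 2 : ℕ) : ℝ) * (r - 1) :=
        sum_le_sum fun n _ => one_sub_inv_pow_le (by linarith) _
    _ = ((∑ n ∈ range M, (2 * k * d ^ n + 2) : ℕ) : ℝ) * (r - 1) := by
        rw [Nat.cast_sum, sum_mul]
    _ ≤ (2 * k + 2) * d ^ M * (r - 1) := by
        gcongr
        exact_mod_cast hsum

lemma tendsto_sum_one_sub_inv_pow_div_abs_log (hd : 2 ≤ d) :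
    Tendsto (fun r : ℝ => (∑ n ∈ range (cutoff d r + 1), (1 - (r ^ (2 * k * d ^ n + 2))⁻¹)) /
      |Real.log (r - 1)|) (𝓝[>] 1) (𝓝 0) := by
  refine tendsto_div_abs_log_sub_one_of_bounded (C := (2 * k + 2) * d) ?_
  filter_upwards [Ioc_mem_nhdsGT one_lt_two] with r ⟨hr, hr2⟩
  refine ⟨sum_nonneg fun n _ => sub_nonneg.2 (inv_le_one_of_one_le₀ (one_le_pow₀ hr.le)), ?_⟩
  calc _ ≤ (2 * k + 2) * d ^ (cutoff d r + 1) * (r - 1) :=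
        sum_range_one_sub_inv_pow_le hd hr.le _
    _ = (2 * k + 2) * d * (d ^ cutoff d r * (r - 1)) := by ring
    _ ≤ (2 * k + 2) * d :=
        mul_le_of_le_one_right (by positivity) (pow_cutoff_mul_le_one hd hr hr2)

end Cutoff

lemma zpow_neg_two_mul_pow_add_two (r : ℝ) (k d n : ℕ) :
    r ^ (-(2 * (k : ℤ) * (d : ℤ) ^ n + 2)) = (r ^ (2 * k * d ^ n + 2))⁻¹ := by
  rw [← zpow_natCast, ← zpow_neg]
  push_cast
  rfl

theorem stmt10_general (d : ℕ) (hd : 2 ≤ d) (k : ℕ) (hk1 : 1 ≤ k) :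
    Tendsto (fun r : ℝ =>
        (∑ n ∈ Finset.range (⌊|Real.log (r - 1)| / Real.log d⌋₊ + 1),
          (1 - r ^ (-(2 * (k : ℤ) * (d : ℤ) ^ n + 2)))) / |Real.log (r - 1)|)
      (nhdsWithin 1 (Set.Ioi 1)) (nhds 0) ∧
    (∃ C : ℝ, ∀ r : ℝ, 1 < r →
      (Summable fun n : ℕ =>
        r ^ (-(2 * (k : ℤ) * (d : ℤ) ^ (⌊|Real.log (r - 1)| / Real.log d⌋₊ + 1 + n) + 2))) ∧
      (∑' n : ℕ,
        r ^ (-(2 * (k : ℤ) * (d : ℤ) ^ (⌊|Real.log (r - 1)| / Real.log d⌋₊ + 1 + n) + 2))) ≤ C) ∧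
    Tendsto (fun r : ℝ =>
        (∑' n : ℕ, r ^ (-(2 * (k : ℤ) * (d : ℤ) ^ n + 2))) / |Real.log (r - 1)|)
      (nhdsWithin 1 (Set.Ioi 1)) (nhds (1 / Real.log d)) := by
  simp only [zpow_neg_two_mul_pow_add_two]
  have hhead := tendsto_sum_one_sub_inv_pow_div_abs_log (k := k) hd
  have htail (r : ℝ) (hr : 1 < r) := summable_tail_and_tsum_tail_le_one hd hk1 hr
    (one_le_pow_cutoff_add_one_mul hd hr)
  refine ⟨hhead, ⟨1, htail⟩, ?_⟩
  have hcount := (tendsto_floor_div_add_one_div_atTop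
    (Real.log_pos (by exact_mod_cast hd : (1 : ℝ) < d))).comp tendsto_abs_log_sub_one_nhdsGT
  have htail_lim : Tendsto (fun r : ℝ =>
      (∑' n, (r ^ (2 * k * d ^ (cutoff d r + 1 + n) + 2))⁻¹) / |Real.log (r - 1)|)
      (𝓝[>] 1) (𝓝 0) := by
    refine tendsto_div_abs_log_sub_one_of_bounded (C := 1) ?_
    filter_upwards [self_mem_nhdsWithin] with r (hr : 1 < r)
    exact ⟨tsum_nonneg fun n => by positivity, (htail r hr).2⟩
  have hsum := (hcount.sub hhead).add htail_lim
  rw [sub_zero, add_zero] at hsum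
  rw [one_div]
  refine hsum.congr' ?_
  filter_upwards [self_mem_nhdsWithin] with r (hr : 1 < r)
  rw [Function.comp_apply, tsum_eq_sub_sum_one_sub_add_tsum_nat_add
    (f := fun n => (r ^ (2 * k * d ^ n + 2))⁻¹) (htail r hr).1, add_div, sub_div]
  rfl

/-- With `N(r) = ⌊|log(r-1)|/log d⌋`, as `r → 1⁺`:
(a) `Σ_{n=0}^{N(r)} (1 - r^{-2kd^n-2}) = o(|log(r-1)|)`;
(b) the tail `Σ_{n>N(r)} r^{-2kd^n-2}` is uniformly bounded (and summable);
(c) `(1/|log(r-1)|) Σ_{n≥0} r^{-2kd^n-2} → 1/log d`. -/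
theorem stmt10 (d : ℕ) (hd : 2 ≤ d) (k : ℕ) (hk1 : 1 ≤ k) (hkd : k ≤ d) :
    Tendsto (fun r : ℝ =>
        (∑ n ∈ Finset.range (⌊|Real.log (r - 1)| / Real.log d⌋₊ + 1),
          (1 - r ^ (-(2 * (k : ℤ) * (d : ℤ) ^ n + 2)))) / |Real.log (r - 1)|)
      (nhdsWithin 1 (Set.Ioi 1)) (nhds 0) ∧
    (∃ C : ℝ, ∀ r : ℝ, 1 < r →
      (Summable fun n : ℕ =>
        r ^ (-(2 * (k : ℤ) * (d : ℤ) ^ (⌊|Real.log (r - 1)| / Real.log d⌋₊ + 1 + n) + 2))) ∧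
      (∑' n : ℕ,
        r ^ (-(2 * (k : ℤ) * (d : ℤ) ^ (⌊|Real.log (r - 1)| / Real.log d⌋₊ + 1 + n) + 2))) ≤ C) ∧
    Tendsto (fun r : ℝ =>
        (∑' n : ℕ, r ^ (-(2 * (k : ℤ) * (d : ℤ) ^ n + 2))) / |Real.log (r - 1)|)
      (nhdsWithin 1 (Set.Ioi 1)) (nhds (1 / Real.log d)) :=
  stmt10_general d hd k hk1
end

section
/- Let d ≥ 2 and c ∈ ℂ. For z ∈ S¹ and |w| > 1, the function v_z(w) = -(w/d) Σ_{n=0}^{∞} c · d^{-n} w^{-d·d^n} (the case c_d ≡ c constant and c_1 = … = c_{d-1} = 0 in the general series) satisfies v_{z^d}(w^d) = d w^{d-1} v_z(w) + c. Equivalently, u(w) = v_z(w) is a solution, holomorphic on {|w| > 1} and vanishing at infinity, of u(w^d) = d w^{d-1} u(w) + c. -/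
open Filter

/-!
With `S(w) = Σ_{n≥0} c d^{-n} w^{-d^{n+1}}`, so that `u(w) = -(w/d) S(w)`, substituting `w^d`
shifts the index: `S(w^d) = d (S(w) - c w^{-d})`, which is the functional equation after
multiplying by `-w^d/d`. On `|w| ≥ 1` the `n`-th term is bounded by `|c| d^{-n} |w|^{-2}`; summing
this geometric majorant gives local uniform convergence (hence holomorphy) and the decay
`|u(w)| ≤ |c| / ((d - 1) |w|)`.
-/

/-- The solution `u(w) = -(w/d) Σ_{n≥0} c d^{-n} w^{-d^{n+1}}` of the functional equation
`u(w^d) = d w^{d-1} u(w) + c`. -/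
noncomputable def uS (d : ℕ) (c : ℂ) (w : ℂ) : ℂ :=
  -(w / d) * ∑' n : ℕ, c * ((d : ℂ)⁻¹) ^ n * w ^ (-((d ^ (n + 1) : ℕ) : ℤ))

noncomputable def uSTerm (d : ℕ) (c : ℂ) (n : ℕ) (w : ℂ) : ℂ :=
  c * ((d : ℂ)⁻¹) ^ n * w ^ (-((d ^ (n + 1) : ℕ) : ℤ))

lemma uS_eq_tsum (d : ℕ) (c w : ℂ) : uS d c w = -(w / d) * ∑' n, uSTerm d c n w := rfl

lemma norm_zpow_neg_natCast_le {𝕜 : Type*} [NormedDivisionRing 𝕜] {w : 𝕜} (hw : 1 ≤ ‖w‖) {m k : ℕ} (hmk : m ≤ k) :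
    ‖w ^ (-(k : ℤ))‖ ≤ (‖w‖ ^ m)⁻¹ := by
  rw [norm_zpow, zpow_neg, zpow_natCast]
  exact inv_anti₀ (by positivity) (pow_le_pow_right₀ hw hmk)

lemma norm_uSTerm_le (d : ℕ) (c : ℂ) {w : ℂ} (hw : 1 ≤ ‖w‖) {m n : ℕ} (hm : m ≤ d ^ (n + 1)) :
    ‖uSTerm d c n w‖ ≤ ‖c‖ * ((d : ℝ)⁻¹) ^ n * (‖w‖ ^ m)⁻¹ := by
  rw [uSTerm, norm_mul, norm_mul, norm_pow, norm_inv, Complex.norm_natCast]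
  gcongr
  exact norm_zpow_neg_natCast_le hw hm

lemma two_le_pow_succ {d : ℕ} (hd : 2 ≤ d) (n : ℕ) : 2 ≤ d ^ (n + 1) :=
  hd.trans (Nat.le_self_pow n.succ_ne_zero d)

lemma inv_natCast_lt_one {d : ℕ} (hd : 2 ≤ d) : (d : ℝ)⁻¹ < 1 :=
  inv_lt_one_of_one_lt₀ (by exact_mod_cast hd)

lemma hasSum_geometric_majorant {d : ℕ} (hd : 2 ≤ d) (c : ℂ) (r : ℝ) :
    HasSum (fun n : ℕ ↦ ‖c‖ * ((d : ℝ)⁻¹) ^ n * r) (‖c‖ * (1 - (d : ℝ)⁻¹)⁻¹ * r) :=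
  ((hasSum_geometric_of_lt_one (by positivity) (inv_natCast_lt_one hd)).mul_left ‖c‖).mul_right r

lemma summable_uSTerm {d : ℕ} (hd : 2 ≤ d) (c : ℂ) {w : ℂ} (hw : 1 ≤ ‖w‖) :
    Summable (fun n ↦ uSTerm d c n w) :=
  .of_norm_bounded (hasSum_geometric_majorant hd c 1).summable fun n ↦ by
    simpa using norm_uSTerm_le d c hw (m := 0) (Nat.zero_le _)

lemma uSTerm_pow {d : ℕ} (hd : d ≠ 0) (c w : ℂ) (n : ℕ) :
    uSTerm d c n (w ^ d) = d * uSTerm d c (n + 1) w := by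
  have hd' : (d : ℂ) ≠ 0 := by exact_mod_cast hd
  simp only [uSTerm, zpow_neg, zpow_natCast, ← pow_mul, ← pow_succ']
  linear_combination (-(c * (d : ℂ)⁻¹ ^ n * (w ^ d ^ (n + 1 + 1))⁻¹)) * mul_inv_cancel₀ hd'

lemma tsum_uSTerm_pow {d : ℕ} (hd : 2 ≤ d) (c : ℂ) {w : ℂ} (hw : 1 ≤ ‖w‖) :
    ∑' n, uSTerm d c n (w ^ d) = d * (∑' n, uSTerm d c n w - c * (w ^ d)⁻¹) := by
  have hzero : uSTerm d c 0 w = c * (w ^ d)⁻¹ := by simp [uSTerm]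
  rw [(summable_uSTerm hd c hw).tsum_eq_zero_add, hzero, add_sub_cancel_left, ← tsum_mul_left]
  exact tsum_congr (uSTerm_pow (by omega) c w)

theorem uS_pow {d : ℕ} (hd : 2 ≤ d) (c : ℂ) {w : ℂ} (hw : 1 ≤ ‖w‖) :
    uS d c (w ^ d) = d * w ^ (d - 1) * uS d c w + c := by
  have hw0 : w ≠ 0 := norm_pos_iff.mp (one_pos.trans_le hw)
  have hd0 : (d : ℂ) ≠ 0 := by exact_mod_cast (two_pos.trans_le hd).ne'
  have hpow : w ^ (d - 1) * w = w ^ d := by rw [← pow_succ, Nat.sub_add_cancel (by omega)]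
  rw [uS_eq_tsum, uS_eq_tsum, tsum_uSTerm_pow hd c hw, ← hpow]
  field_simp
  ring

theorem differentiableOn_uS {d : ℕ} (hd : 2 ≤ d) (c : ℂ) :
    DifferentiableOn ℂ (uS d c) {w : ℂ | 1 < ‖w‖} := by
  have hopen : IsOpen {w : ℂ | 1 < ‖w‖} := isOpen_lt continuous_const continuous_norm
  have hterm (n : ℕ) : DifferentiableOn ℂ (uSTerm d c n) {w : ℂ | 1 < ‖w‖} := fun w hw ↦
    ((differentiableAt_zpow.2 (Or.inl (norm_pos_iff.mp (one_pos.trans hw)))).const_mul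
      _).differentiableWithinAt
  have hseries := Complex.differentiableOn_tsum_of_summable_norm
    (hasSum_geometric_majorant hd c 1).summable hterm hopen fun n w hw ↦ by
      simpa using norm_uSTerm_le d c hw.le (m := 0) (Nat.zero_le _)
  exact ((differentiable_id.div_const _).neg.differentiableOn).mul hseries

theorem norm_uS_le {d : ℕ} (hd : 2 ≤ d) (c : ℂ) {w : ℂ} (hw : 1 ≤ ‖w‖) :
    ‖uS d c w‖ ≤ ‖c‖ / (d - 1) * ‖w‖⁻¹ := by
  have hw0 : 0 < ‖w‖ := one_pos.trans_le hw
  have hd1 : (1 : ℝ) < d := by exact_mod_cast hd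
  have hseries : ‖∑' n, uSTerm d c n w‖ ≤ ‖c‖ * (1 - (d : ℝ)⁻¹)⁻¹ * (‖w‖ ^ 2)⁻¹ :=
    tsum_of_norm_bounded (hasSum_geometric_majorant hd c _) fun n ↦
      norm_uSTerm_le d c hw (two_le_pow_succ hd n)
  calc ‖uS d c w‖ ≤ ‖w‖ / d * (‖c‖ * (1 - (d : ℝ)⁻¹)⁻¹ * (‖w‖ ^ 2)⁻¹) := by
        rw [uS_eq_tsum, norm_mul, norm_neg, norm_div, Complex.norm_natCast]
        gcongr
    _ = ‖c‖ / (d - 1) * ‖w‖⁻¹ := by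
        have : (d : ℝ) - 1 ≠ 0 := by linarith
        field_simp

theorem tendsto_uS_cobounded {d : ℕ} (hd : 2 ≤ d) (c : ℂ) :
    Tendsto (uS d c) (Bornology.cobounded ℂ) (nhds 0) := by
  have hnorm := tendsto_norm_cobounded_atTop (E := ℂ)
  have hbound : Tendsto (fun w : ℂ ↦ ‖c‖ / (d - 1) * ‖w‖⁻¹) (Bornology.cobounded ℂ) (nhds 0) := by
    simpa using hnorm.inv_tendsto_atTop.const_mul (‖c‖ / (d - 1))
  refine squeeze_zero_norm' ?_ hbound
  filter_upwards [hnorm.eventually_ge_atTop 1] with w hw using norm_uS_le hd c hw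

/-- For `d ≥ 2` and `c ∈ ℂ`, the function `u = uS d c` satisfies
`u(w^d) = d w^{d-1} u(w) + c` on `{|w| > 1}`, is holomorphic there,
and vanishes at infinity. -/
theorem stmt17 (d : ℕ) (hd : 2 ≤ d) (c : ℂ) :
    (∀ w : ℂ, 1 < ‖w‖ →
      uS d c (w ^ d) = d * w ^ (d - 1) * uS d c w + c) ∧
    DifferentiableOn ℂ (uS d c) {w : ℂ | 1 < ‖w‖} ∧
    Tendsto (uS d c) (Bornology.cobounded ℂ) (nhds 0) :=
  ⟨fun _ hw ↦ uS_pow hd c hw.le, differentiableOn_uS hd c, tendsto_uS_cobounded hd c⟩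
end
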